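/- arXiv:1309.0330 — 2 statements merged into one kernel-verified Lean document; each statement's English description precedes it below -/
import Mathlib

section
/- The number of Gelfand-Tsetlin patterns with top row a given partition λ = (λ_1, …, λ_{n+1}) equals the product over 1 ≤ i < j ≤ n+1 of (λ_i − λ_j + j − i)/(j − i), i.e. equals the dimension of the irreducible gl_{n+1}-representation of highest weight λ given by the Weyl dimension formula. -/
/-- A Gelfand-Tsetlin pattern with top row `top` (a sequence of `m+1` nonnegative integers):
rows `rows j` for `j : Fin (m+1)`, where row `j` has `j+1` parts, each row is weakly
decreasing, consecutive rows interlace, and the top row equals `top`. -/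
structure GTPattern (m : ℕ) (top : Fin (m+1) → ℕ) where
  rows : (j : Fin (m+1)) → Fin (j.val + 1) → ℕ
  antitone : ∀ (j : Fin (m+1)) (a b : Fin (j.val + 1)), a ≤ b → rows j b ≤ rows j a
  interlace : ∀ (j : Fin m) (i : Fin (j.val + 1)),
    rows ⟨j.val + 1, Nat.succ_lt_succ j.isLt⟩ ⟨i.val + 1, Nat.succ_lt_succ i.isLt⟩
        ≤ rows ⟨j.val, Nat.lt_succ_of_lt j.isLt⟩ i ∧
      rows ⟨j.val, Nat.lt_succ_of_lt j.isLt⟩ i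
        ≤ rows ⟨j.val + 1, Nat.succ_lt_succ j.isLt⟩ ⟨i.val, Nat.lt_succ_of_lt i.isLt⟩
  top_eq : ∀ i : Fin (m+1), rows (Fin.last m) ⟨i.val, i.isLt⟩ = top i

/-!
Removing the top row of a pattern with top row `λ` leaves a pattern whose top row `μ`
interlaces `λ`, so the number of patterns obeys the branching rule
`N(λ) = ∑_{μ interlacing λ} N(μ)`. The Weyl product obeys the same rule. It equals
`det V(ρ - λ) / det V(ρ)` with `V` the Vandermonde matrix and `ρ i = i`, and under
`w i = i - μ i` the interlacing `μ` become the integer points of a box `∏ [u i, u (i+1))`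
with `u = ρ - λ`. By multilinearity the sum of `det V(w)` over the box is the determinant of
the power sums `∑_{t ∈ [a, b)} t ^ j = (B_{j+1}(b) - B_{j+1}(a)) / (j + 1)`, `B_k` the
Bernoulli polynomials. As `B_k` is monic of degree `k`, `det (B_j (u i)) = det V(u)`, and
taking successive row differences yields `(n+1)! ∑_μ det V(ρ - μ) = det V(ρ - λ)`.
-/

open Finset Matrix
open scoped Nat

namespace Polynomial

theorem natDegree_bernoulli (n : ℕ) : (bernoulli n).natDegree = n := by
  refine natDegree_eq_of_le_of_coeff_ne_zero ?_ (by simp [coeff_bernoulli])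
  exact natDegree_le_iff_coeff_eq_zero.mpr fun N hN => by simp [coeff_bernoulli, hN.not_ge]

theorem monic_bernoulli (n : ℕ) : (bernoulli n).Monic := by
  rw [Monic, leadingCoeff, natDegree_bernoulli, coeff_bernoulli]
  simp

theorem succ_mul_sum_Ico_pow {a b : ℤ} (hab : a ≤ b) (p : ℕ) :
    (p + 1 : ℚ) * ∑ t ∈ Ico a b, (t : ℚ) ^ p =
      (bernoulli (p + 1)).eval (b : ℚ) - (bernoulli (p + 1)).eval (a : ℚ) := by
  induction b, hab using Int.leInduction with
  | base => simp
  | succ b hab ih =>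
    rw [Finset.Ico_add_one_right_eq_Icc, ← Ico_insert_right hab, sum_insert right_notMem_Ico,
      mul_add, ih]
    push_cast
    rw [add_comm (b : ℚ), bernoulli_eval_one_add]
    push_cast
    ring

end Polynomial

namespace Matrix

theorem sum_piFinset_det_of {ι α R : Type*} [Fintype ι] [DecidableEq ι] [CommRing R]
    (A : ι → Finset α) (g : ι → α → ι → R) :
    ∑ r ∈ Fintype.piFinset A, det (of fun i => g i (r i)) =
      det (of fun i j => ∑ t ∈ A i, g i t j) := by
  have := (detRowAlternating (R := R) (n := ι)).toMultilinearMap.map_sum_finset g A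
  simp only [AlternatingMap.coe_multilinearMap] at this
  rw [show (of fun i j => ∑ t ∈ A i, g i t j) = of fun i => ∑ t ∈ A i, g i t by
    ext; simp [Finset.sum_apply]]
  exact this.symm

theorem det_vandermonde_eq_det_bernoulli {N : ℕ} (v : Fin N → ℚ) :
    det (vandermonde v) = det (of fun i j : Fin N => (Polynomial.bernoulli j).eval (v i)) :=
  det_eval_matrixOfPolynomials_eq_det_vandermonde v _ (fun _ => Polynomial.natDegree_bernoulli _)
    fun _ => Polynomial.monic_bernoulli _

theorem factorial_mul_sum_det_vandermonde_piFinset_Ico {N : ℕ} {u : Fin (N + 1) → ℤ}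
    (hu : Monotone u) :
    (N ! : ℚ) * ∑ w ∈ Fintype.piFinset fun i : Fin N => Ico (u i.castSucc) (u i.succ),
        det (vandermonde fun i => (w i : ℚ)) = det (vandermonde fun i => (u i : ℚ)) := by
  let B : ℕ → Fin (N + 1) → ℚ := fun k i => (Polynomial.bernoulli k).eval (u i : ℚ)
  let D : Matrix (Fin (N + 1)) (Fin (N + 1)) ℚ :=
    of (Fin.cons (fun j => B j 0) fun i j => B j i.succ - B j i.castSucc)
  have hrows : det (of fun i j : Fin (N + 1) => B j i) = det D :=
    det_eq_of_forall_row_eq_smul_add_pred (fun _ => 1) (fun j => by simp [D])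
      fun i j => by simp [D]
  have hcol : det D = det (D.submatrix Fin.succ Fin.succ) := by
    rw [det_succ_column_zero, Fin.sum_univ_succ, Finset.sum_eq_zero fun i _ => by simp [D, B]]
    simp [D, B]
  have hprod : ∏ j : Fin N, ((j : ℕ) + 1 : ℚ) = N ! := by
    rw [Fin.prod_univ_eq_prod_range (fun j => (j : ℚ) + 1),
      ← Finset.prod_range_add_one_eq_factorial]
    push_cast; rfl
  have hminor : det (D.submatrix Fin.succ Fin.succ) =
      N ! * det (of fun i j : Fin N => ∑ t ∈ Ico (u i.castSucc) (u i.succ), (t : ℚ) ^ (j : ℕ)) := by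
    rw [← hprod, ← det_mul_row]
    congr 1
    ext i j
    rw [of_apply, of_apply, Polynomial.succ_mul_sum_Ico_pow (Fin.monotone_iff_le_succ.mp hu i)]
    simp [D, B]
  rw [det_vandermonde_eq_det_bernoulli, hrows, hcol, hminor, ← sum_piFinset_det_of]
  rfl

end Matrix

theorem Finset.prod_prod_ite_lt {M : Type*} [CommMonoid M] {k : ℕ} (f : Fin k → Fin k → M) :
    ∏ j, ∏ i, (if i < j then f i j else 1) = ∏ i, ∏ j ∈ Ioi i, f i j := by
  rw [Finset.prod_comm]
  refine Finset.prod_congr rfl fun i _ => ?_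
  rw [← Finset.prod_filter]
  congr 1
  ext
  simp

def weylDim {k : ℕ} (ν : Fin k → ℕ) : ℚ :=
  ∏ j : Fin k, ∏ i : Fin k,
    if i < j then ((ν i : ℚ) - ν j + j.val - i.val) / ((j.val : ℚ) - i.val) else 1

theorem weylDim_eq_det_div {k : ℕ} (ν : Fin k → ℕ) :
    weylDim ν =
      det (vandermonde fun i => (i : ℚ) - ν i) / det (vandermonde fun i : Fin k => (i : ℚ)) := by
  rw [weylDim, Finset.prod_prod_ite_lt, det_vandermonde, det_vandermonde, ← prod_div_distrib]
  refine prod_congr rfl fun i _ => ?_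
  rw [← prod_div_distrib]
  refine prod_congr rfl fun j _ => ?_
  ring

def interlacingBox {n : ℕ} (lam : Fin (n + 2) → ℕ) : Finset (Fin (n + 1) → ℕ) :=
  Fintype.piFinset fun i => Icc (lam i.succ) (lam i.castSucc)

theorem antitone_of_mem_interlacingBox {n : ℕ} {lam : Fin (n + 2) → ℕ} {μ : Fin (n + 1) → ℕ}
    (hμ : μ ∈ interlacingBox lam) : Antitone μ := by
  rw [interlacingBox, Fintype.mem_piFinset] at hμ
  exact Fin.antitone_iff_succ_le.mpr fun i =>
    (mem_Icc.mp (hμ i.succ)).2.trans (mem_Icc.mp (hμ i.castSucc)).1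

theorem sum_interlacingBox_eq_sum_piFinset_Ico {n : ℕ} {M : Type*} [AddCommMonoid M]
    (lam : Fin (n + 2) → ℕ) (f : (Fin (n + 1) → ℤ) → M) :
    ∑ μ ∈ interlacingBox lam, f (fun i => i - μ i) =
      ∑ w ∈ Fintype.piFinset fun i : Fin (n + 1) =>
        Ico ((i.castSucc : ℤ) - lam i.castSucc) ((i.succ : ℤ) - lam i.succ), f w := by
  refine sum_nbij' (fun μ i => i - μ i) (fun w i => (i - w i).toNat) ?_ ?_ ?_ ?_ fun _ _ => rfl
  all_goals
    intro x hx
    simp only [interlacingBox, Fintype.mem_piFinset, mem_Icc, mem_Ico, Fin.val_succ,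
      Fin.val_castSucc] at hx ⊢
  · intro i; have := hx i; push_cast; omega
  · intro i; have := hx i; omega
  · funext i; omega
  · funext i; have := hx i; omega

theorem sum_interlacingBox_weylDim {n : ℕ} {lam : Fin (n + 2) → ℕ} (hlam : Antitone lam) :
    ∑ μ ∈ interlacingBox lam, weylDim μ = weylDim lam := by
  have hu : Monotone fun i : Fin (n + 2) => (i : ℤ) - lam i :=
    Fin.monotone_iff_le_succ.mpr fun i => by
      have := hlam (Fin.castSucc_le_succ i)
      simp only [Fin.val_succ, Fin.val_castSucc]
      omega
  have key := factorial_mul_sum_det_vandermonde_piFinset_Ico hu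
  rw [← sum_interlacingBox_eq_sum_piFinset_Ico lam fun w => det (vandermonde fun i => (w i : ℚ))]
    at key
  simp only [weylDim_eq_det_div, ← sum_div, det_vandermonde_id_eq_superFactorial,
    Nat.superFactorial_succ]
  push_cast at key ⊢
  rw [← key]
  field_simp

namespace GTPattern

@[ext]
theorem ext {m : ℕ} {top : Fin (m + 1) → ℕ} {P Q : GTPattern m top} (h : P.rows = Q.rows) :
    P = Q := by
  cases P; cases Q; cases h; rfl

theorem antitone_top {m : ℕ} {top : Fin (m + 1) → ℕ} (P : GTPattern m top) : Antitone top :=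
  fun a b hab => by
    simpa only [P.top_eq] using P.antitone (Fin.last m) ⟨a, a.isLt⟩ ⟨b, b.isLt⟩ hab

instance (top : Fin 1 → ℕ) : Unique (GTPattern 0 top) where
  default :=
    { rows := fun _ _ => top 0
      antitone := fun _ _ _ _ => le_rfl
      interlace := fun j => j.elim0
      top_eq := fun i => congrArg top (Fin.ext (by omega)) }
  uniq P := by
    ext j i
    obtain rfl : j = Fin.last 0 := Fin.ext (by omega)
    exact (P.top_eq ⟨i, i.isLt⟩).trans (congrArg top (Fin.ext (by simp)))

section Succ

variable {n : ℕ} {lam : Fin (n + 2) → ℕ} {μ : Fin (n + 1) → ℕ}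

def secondRow (P : GTPattern (n + 1) lam) : Fin (n + 1) → ℕ :=
  P.rows ⟨n, by omega⟩

theorem secondRow_mem_interlacingBox (P : GTPattern (n + 1) lam) :
    P.secondRow ∈ interlacingBox lam :=
  Fintype.mem_piFinset.mpr fun i => mem_Icc.mpr
    ⟨(P.top_eq i.succ).symm.trans_le (P.interlace ⟨n, by omega⟩ i).1,
      (P.interlace ⟨n, by omega⟩ i).2.trans_eq (P.top_eq i.castSucc)⟩

def truncate (P : GTPattern (n + 1) lam) (hP : P.secondRow = μ) : GTPattern n μ where
  rows j := P.rows ⟨j, by omega⟩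
  antitone j := P.antitone ⟨j, by omega⟩
  interlace j := P.interlace ⟨j, by omega⟩
  top_eq i := congrFun hP i

def extend (hlam : Antitone lam) (hμ : μ ∈ interlacingBox lam) (Q : GTPattern n μ) :
    GTPattern (n + 1) lam where
  rows j := if h : j.val < n + 1 then Q.rows ⟨j, h⟩ else fun i => lam ⟨i, by omega⟩
  antitone j a b hab := by
    by_cases h : j.val < n + 1
    · simpa only [dif_pos h] using Q.antitone ⟨j, h⟩ a b hab
    · simpa only [dif_neg h] using
        hlam (show (⟨a, by omega⟩ : Fin (n + 2)) ≤ ⟨b, by omega⟩ from hab)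
  interlace j i := by
    by_cases h : j.val + 1 < n + 1
    · simp only [dif_pos h, dif_pos (show j.val < n + 1 by omega)]
      exact Q.interlace ⟨j, by omega⟩ i
    · have hj : j.val = n := by omega
      simp only [dif_neg h, dif_pos (show j.val < n + 1 by omega)]
      have hQ : Q.rows ⟨j, by omega⟩ i = μ ⟨i, by omega⟩ := by
        rw [← Q.top_eq]
        congr 1
        · exact Fin.ext hj
        · rw [Fin.heq_ext_iff (by simp [hj])]
      rw [hQ]
      exact mem_Icc.mp (Fintype.mem_piFinset.mp hμ ⟨i, by omega⟩)
  top_eq i := by simp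

theorem secondRow_extend (hlam : Antitone lam) (hμ : μ ∈ interlacingBox lam)
    (Q : GTPattern n μ) : (extend hlam hμ Q).secondRow = μ := by
  funext i
  simp only [secondRow, extend, dif_pos (show n < n + 1 by omega)]
  exact Q.top_eq i

def fiberEquiv (hlam : Antitone lam) (hμ : μ ∈ interlacingBox lam) :
    {P : GTPattern (n + 1) lam // P.secondRow = μ} ≃ GTPattern n μ where
  toFun P := truncate P.1 P.2
  invFun Q := ⟨extend hlam hμ Q, secondRow_extend hlam hμ Q⟩
  left_inv P := by
    ext j i
    by_cases h : j.val < n + 1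
    · simp [extend, truncate, Nat.le_of_lt_succ h]
    · obtain rfl : j = Fin.last (n + 1) := Fin.ext (by simp; omega)
      simpa [extend] using (P.1.top_eq ⟨i, i.isLt⟩).symm
  right_inv Q := by
    ext j i
    simp [extend, truncate, Nat.le_of_lt_succ j.isLt]

def equivSigmaInterlacingBox (hlam : Antitone lam) :
    GTPattern (n + 1) lam ≃ Σ μ : interlacingBox lam, GTPattern n μ :=
  (Equiv.sigmaFiberEquiv fun P => (⟨P.secondRow, P.secondRow_mem_interlacingBox⟩ :
      interlacingBox lam)).symm.trans <|
    Equiv.sigmaCongrRight fun μ =>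
      (Equiv.subtypeEquivRight fun _ => Subtype.ext_iff).trans (fiberEquiv hlam μ.2)

end Succ

instance finite (m : ℕ) (top : Fin (m + 1) → ℕ) : Finite (GTPattern m top) := by
  induction m with
  | zero => infer_instance
  | succ n ih =>
    by_cases hlam : Antitone top
    · exact Finite.of_equiv _ (equivSigmaInterlacingBox hlam).symm
    · have : IsEmpty (GTPattern (n + 1) top) := ⟨fun P => hlam P.antitone_top⟩
      infer_instance

theorem card_succ {n : ℕ} {lam : Fin (n + 2) → ℕ} (hlam : Antitone lam) :
    Nat.card (GTPattern (n + 1) lam) = ∑ μ ∈ interlacingBox lam, Nat.card (GTPattern n μ) := by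
  rw [Nat.card_congr (equivSigmaInterlacingBox hlam), Nat.card_sigma,
    ← sum_coe_sort (interlacingBox lam)]

end GTPattern

/-- the number of Gelfand-Tsetlin patterns with top row λ equals the Weyl
dimension formula product ∏_{i<j} (λ_i − λ_j + j − i)/(j − i). -/
theorem stmt_3 (n : ℕ) (lam : Fin (n+1) → ℕ) (hlam : Antitone lam) :
    (Nat.card (GTPattern n lam) : ℚ) =
      ∏ j : Fin (n+1), ∏ i : Fin (n+1),
        if i < j then ((lam i : ℚ) - lam j + j.val - i.val) / ((j.val : ℚ) - i.val) else 1 := by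
  induction n with
  | zero => simp
  | succ n ih =>
    rw [GTPattern.card_succ hlam, Nat.cast_sum]
    calc ∑ μ ∈ interlacingBox lam, (Nat.card (GTPattern n μ) : ℚ)
        = ∑ μ ∈ interlacingBox lam, weylDim μ :=
          sum_congr rfl fun μ hμ => ih μ (antitone_of_mem_interlacingBox hμ)
      _ = weylDim lam := sum_interlacingBox_weylDim hlam
end

section
/- Let R^λ_2 be the cyclotomic KLR algebra of type A_1 (nilHecke case) with cyclotomic parameter m = λ̄_1, i.e. the quotient of the nilHecke algebra NH_k by the two-sided ideal generated by x_1^m. Then the idempotent 1_{m+1} consisting of m+1 parallel strands is zero in R^λ_2; equivalently, the cyclotomic nilHecke algebra on m+1 strands with cyclotomic degree m is the zero algebra. -/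
/-!
Write `h_n(x₁,…,x_k)` for the complete homogeneous symmetric polynomial. The nilHecke
relations make `ψ_k` act on polynomials in `x₁,…,x_{k+1}` as a twisted divided difference, so
that `ψ_k h_{n+1}(x₁,…,x_k) = h_{n+1}(x₁,…,x_{k-1},x_{k+1}) ψ_k + h_n(x₁,…,x_{k+1})`.
Hence, if `h_{n+1}(x₁,…,x_k) = 0` then `g := h_n(x₁,…,x_{k+1})` satisfies
`g = -(x_{k+1} - x_k) g ψ_k`, and `ψ_k² = 0` forces `g = 0`. Starting from
`h_m(x₁) = x₁^m = 0` this gives `h_{m-k}(x₁,…,x_{k+1}) = 0` for all `k ≤ m`, and `k = m`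
reads `1 = 0`.
-/

namespace NilHecke

section Semiring

variable {R : Type*} [Semiring R]

/-- `hsymm v n k` is the complete homogeneous symmetric polynomial of degree `n`
evaluated at `v 0, …, v (k-1)`. -/
def hsymm (v : ℕ → R) : ℕ → ℕ → R
  | 0, _ => 1
  | _ + 1, 0 => 0
  | n + 1, k + 1 => hsymm v (n + 1) k + v k * hsymm v n (k + 1)

@[simp] lemma hsymm_zero (v : ℕ → R) (k : ℕ) : hsymm v 0 k = 1 := by rw [hsymm]

@[simp] lemma hsymm_succ_zero (v : ℕ → R) (n : ℕ) : hsymm v (n + 1) 0 = 0 := by rw [hsymm]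

lemma hsymm_succ_succ (v : ℕ → R) (n k : ℕ) :
    hsymm v (n + 1) (k + 1) = hsymm v (n + 1) k + v k * hsymm v n (k + 1) := by
  rw [hsymm]

lemma hsymm_one (v : ℕ → R) (n : ℕ) : hsymm v n 1 = v 0 ^ n := by
  induction n with
  | zero => simp
  | succ n ih => rw [hsymm_succ_succ, hsymm_succ_zero, ih, zero_add, pow_succ']

lemma hsymm_congr {v w : ℕ → R} {k : ℕ} (h : ∀ j < k, v j = w j) (n : ℕ) :
    hsymm v n k = hsymm w n k := by
  induction n generalizing k with
  | zero => simp
  | succ n ih =>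
    induction k with
    | zero => simp
    | succ k ihk =>
      rw [hsymm_succ_succ, hsymm_succ_succ, ihk (fun j hj => h j (by omega)), h k k.lt_succ_self,
        ih h]

lemma hsymm_commute {v : ℕ → R} {a : R} {k : ℕ} (h : ∀ j < k, Commute a (v j)) (n : ℕ) :
    Commute a (hsymm v n k) := by
  induction n generalizing k with
  | zero => simp
  | succ n ih =>
    induction k with
    | zero => simp
    | succ k ihk =>
      rw [hsymm_succ_succ]
      exact (ihk fun j hj => h j (by omega)).add_right
        ((h k k.lt_succ_self).mul_right (ih h))

lemma mul_hsymm_eq_hsymm_update_mul_add {v : ℕ → R} {k : ℕ} {ψ : R}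
    (hfar : ∀ j < k, Commute ψ (v j)) (hslide : ψ * v k = v (k + 1) * ψ + 1) (n : ℕ) :
    ψ * hsymm v (n + 1) (k + 1) =
      hsymm (Function.update v k (v (k + 1))) (n + 1) (k + 1) * ψ + hsymm v n (k + 2) := by
  have hlow : ∀ n, hsymm (Function.update v k (v (k + 1))) n k = hsymm v n k :=
    hsymm_congr fun j hj => Function.update_of_ne hj.ne _ _
  induction n with
  | zero =>
    rw [hsymm_succ_succ, hsymm_succ_succ, hlow, Function.update_self, mul_add,
      (hsymm_commute hfar 1).eq, ← mul_assoc, hslide]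
    simp only [hsymm_zero, mul_one, add_mul, add_assoc]
  | succ n ih =>
    rw [hsymm_succ_succ v (n + 1) k, mul_add, (hsymm_commute hfar _).eq, ← mul_assoc, hslide,
      add_mul, one_mul, mul_assoc, ih, hsymm_succ_succ _ (n + 1) k, hlow,
      Function.update_self, hsymm_succ_succ v n (k + 1)]
    simp only [mul_add, add_mul, mul_assoc]
    abel

end Semiring

section Ring

variable {R : Type*} [Ring R]

lemma hsymm_update_eq_add_sub_mul (v : ℕ → R) (k : ℕ) (hv : Commute (v k) (v (k + 1)))
    (n : ℕ) :
    hsymm (Function.update v k (v (k + 1))) (n + 1) (k + 1) =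
      hsymm v (n + 1) (k + 1) + (v (k + 1) - v k) * hsymm v n (k + 2) := by
  have hlow : ∀ n, hsymm (Function.update v k (v (k + 1))) n k = hsymm v n k :=
    hsymm_congr fun j hj => Function.update_of_ne hj.ne _ _
  induction n with
  | zero =>
    simp only [hsymm_succ_succ, hlow, Function.update_self, hsymm_zero]
    noncomm_ring
  | succ n ih =>
    have hv' : v (k + 1) * (v (k + 1) - v k) = (v (k + 1) - v k) * v (k + 1) :=
      ((Commute.refl _).sub_right hv.symm).eq
    rw [hsymm_succ_succ _ (n + 1) k, hlow, Function.update_self, ih, hsymm_succ_succ v (n + 1) k,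
      hsymm_succ_succ v n (k + 1), mul_add, ← mul_assoc, hv']
    noncomm_ring

lemma hsymm_eq_zero_of_succ {v : ℕ → R} {k : ℕ} {ψ : R} (hv : Commute (v k) (v (k + 1)))
    (hψ : ψ * ψ = 0) (hfar : ∀ j < k, Commute ψ (v j)) (hslide : ψ * v k = v (k + 1) * ψ + 1)
    {n : ℕ} (h : hsymm v (n + 1) (k + 1) = 0) : hsymm v n (k + 2) = 0 := by
  set g := hsymm v n (k + 2)
  have hg : g = -((v (k + 1) - v k) * g * ψ) := by
    have key := mul_hsymm_eq_hsymm_update_mul_add hfar hslide n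
    rw [h, mul_zero, hsymm_update_eq_add_sub_mul v k hv n, h, zero_add] at key
    exact eq_neg_of_add_eq_zero_right key.symm
  have hgψ : g * ψ = 0 := by rw [hg, neg_mul, mul_assoc _ ψ ψ, hψ, mul_zero, neg_zero]
  rw [hg, mul_assoc, hgψ, mul_zero, neg_zero]

section Cyclotomic

variable (X ψ : ℕ → R) (m : ℕ)
  (hxx : ∀ k < m, Commute (X k) (X (k + 1))) (hψψ : ∀ k < m, ψ k * ψ k = 0)
  (hfar : ∀ k < m, ∀ j < k, Commute (ψ k) (X j))
  (hslide : ∀ k < m, ψ k * X k = X (k + 1) * ψ k + 1) (hcyc : X 0 ^ m = 0)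
include hxx hψψ hfar hslide hcyc

lemma hsymm_eq_zero_of_add_eq (k : ℕ) : ∀ n, n + k = m → hsymm X n (k + 1) = 0 := by
  induction k with
  | zero =>
    intro n hn
    rw [hsymm_one, ← hcyc, ← hn, add_zero]
  | succ k ih =>
    intro n hnk
    exact hsymm_eq_zero_of_succ (hxx k (by omega)) (hψψ k (by omega)) (hfar k (by omega))
      (hslide k (by omega)) (ih (n + 1) (by omega))

theorem one_eq_zero_of_cyclotomic : (1 : R) = 0 := by
  simpa using hsymm_eq_zero_of_add_eq X ψ m hxx hψψ hfar hslide hcyc m 0 (zero_add m)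

end Cyclotomic

end Ring

end NilHecke

open NilHecke in
theorem stmt_13_general (R : Type) [Ring R] (m : ℕ) (x : Fin (m+1) → R) (p : Fin m → R)
    (hxx : ∀ i j, x i * x j = x j * x i)
    (hpp : ∀ i, p i * p i = 0)
    (hslide1 : ∀ i : Fin m, p i * x i.castSucc = x i.succ * p i + 1)
    (hfarx : ∀ (i : Fin m) (j : Fin (m+1)), j.val ≠ i.val → j.val ≠ i.val + 1 →
      p i * x j = x j * p i)
    (hcyc : x 0 ^ m = 0) :
    (1 : R) = 0 := by
  let X : ℕ → R := fun j => if h : j < m + 1 then x ⟨j, h⟩ else 0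
  let ψ : ℕ → R := fun k => if h : k < m then p ⟨k, h⟩ else 0
  have hX : ∀ j (h : j < m + 1), X j = x ⟨j, h⟩ := fun j h => dif_pos h
  have hψ : ∀ k (h : k < m), ψ k = p ⟨k, h⟩ := fun k h => dif_pos h
  refine one_eq_zero_of_cyclotomic X ψ m ?_ ?_ ?_ ?_ ?_
  · intro k hk
    rw [hX k (by omega), hX (k + 1) (by omega)]
    exact hxx _ _
  · intro k hk
    rw [hψ k hk]
    exact hpp _
  · intro k hk j hj
    rw [hψ k hk, hX j (by omega)]
    exact hfarx _ _ (show j ≠ k by omega) (show j ≠ k + 1 by omega)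
  · intro k hk
    rw [hψ k hk, hX k (by omega), hX (k + 1) (by omega)]
    exact hslide1 _
  · rw [hX 0 m.succ_pos]
    exact hcyc

/-- the cyclotomic nilHecke algebra on m+1 strands at level m is zero: in any
ring with elements x₁,…,x_{m+1}, ψ₁,…,ψ_m satisfying the nilHecke relations together with
x₁^m = 0, one has 1 = 0. -/
theorem stmt_13 (R : Type) [Ring R] (m : ℕ) (x : Fin (m+1) → R) (p : Fin m → R)
    (hxx : ∀ i j, x i * x j = x j * x i)
    (hpp : ∀ i, p i * p i = 0)
    (hbr : ∀ (i : Fin m) (h : i.val + 1 < m),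
      p i * p ⟨i.val + 1, h⟩ * p i = p ⟨i.val + 1, h⟩ * p i * p ⟨i.val + 1, h⟩)
    (hfar : ∀ i j : Fin m, 1 < ((i.val : ℤ) - j.val).natAbs → p i * p j = p j * p i)
    (hslide1 : ∀ i : Fin m, p i * x i.castSucc = x i.succ * p i + 1)
    (hslide2 : ∀ i : Fin m, x i.castSucc * p i = p i * x i.succ + 1)
    (hfarx : ∀ (i : Fin m) (j : Fin (m+1)), j.val ≠ i.val → j.val ≠ i.val + 1 →
      p i * x j = x j * p i)
    (hcyc : x 0 ^ m = 0) :
    (1 : R) = 0 :=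
  stmt_13_general R m x p hxx hpp hslide1 hfarx hcyc
end
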